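/- The matroid M*(K5), the dual of the cycle matroid of the complete graph K5, is an even-cycle matroid with a blocking pair. -/

import Mathlib

open Set Matroid

noncomputable section

/-- Augmentation property for linear independence of columns. -/
theorem colIndep_aug {K V n : Type*} [Field K] [AddCommGroup V] [Module K V]
    [FiniteDimensional K V] [Finite n] (v : n → V) {I J : Set n}
    (hI : LinearIndependent K (fun i : I => v i)) (hJ : LinearIndependent K (fun i : J => v i))
    (hcard : I.ncard < J.ncard) :
    ∃ e ∈ J, e ∉ I ∧ LinearIndependent K (fun i : ↥(insert e I) => v i) := by
  classical
  by_contra h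
  push_neg at h
  have hspan : ∀ e ∈ J, v e ∈ Submodule.span K (v '' I) := by
    intro e he
    by_cases heI : e ∈ I
    · exact Submodule.subset_span ⟨e, heI, rfl⟩
    by_contra hsp
    exact h e he heI ((linearIndepOn_insert heI).2 ⟨hI, hsp⟩)
  have hle : Submodule.span K (v '' J) ≤ Submodule.span K (v '' I) := by
    rw [Submodule.span_le]
    rintro _ ⟨e, he, rfl⟩
    exact hspan e he
  haveI : Fintype I := (Set.toFinite I).fintype
  haveI : Fintype J := (Set.toFinite J).fintype
  have hIcard : Module.finrank K (Submodule.span K (v '' I)) = I.ncard := by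
    rw [Set.image_eq_range, finrank_span_eq_card hI, Set.ncard_eq_toFinset_card',
      Set.toFinset_card]
  have hJcard : Module.finrank K (Submodule.span K (v '' J)) = J.ncard := by
    rw [Set.image_eq_range, finrank_span_eq_card hJ, Set.ncard_eq_toFinset_card',
      Set.toFinset_card]
  have := Submodule.finrank_mono (R := K) hle
  omega

/-- The column matroid of a matrix over `GF(2)`: the matroid on the columns of `A`,
where a set of columns is independent iff it is linearly independent over `GF(2)`. -/
def colMatroid {m n : Type*} [Fintype m] [Fintype n] (A : Matrix m n (ZMod 2)) : Matroid n :=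
  (IndepMatroid.ofFinite (Set.finite_univ (α := n))
    (fun I => LinearIndependent (ZMod 2) (fun i : I => A.transpose i))
    linearIndependent_empty_type
    (fun I J hJ hIJ => hJ.comp (Set.inclusion hIJ) (Set.inclusion_injective hIJ))
    (fun I J hI hJ hc => colIndep_aug A.transpose hI hJ hc)
    (fun I _ => Set.subset_univ I)).matroid

namespace Matroid

/-- Deletion of a set of elements from a matroid. -/
def del {α : Type*} (M : Matroid α) (D : Set α) : Matroid α := M ↾ (M.E \ D)

/-- Contraction of a set of elements from a matroid, defined by duality. -/
def con {α : Type*} (M : Matroid α) (C : Set α) : Matroid α := (M✶.del C)✶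

/-- Matroid isomorphism: a bijection between ground sets preserving independence. -/
def IsoTo {α β : Type*} (M : Matroid α) (N : Matroid β) : Prop :=
  ∃ φ : α → β, Set.BijOn φ M.E N.E ∧ ∀ I ⊆ M.E, (M.Indep I ↔ N.Indep (φ '' I))

/-- `M` has a minor isomorphic to `N`. -/
def HasMinorIsoTo {α β : Type*} (M : Matroid α) (N : Matroid β) : Prop :=
  ∃ C D : Set α, ((M.con C).del D).IsoTo N

/-- A binary matroid: one isomorphic to the column matroid of a matrix over `GF(2)`. -/
def IsBinary {α : Type*} (M : Matroid α) : Prop :=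
  ∃ (k l : ℕ) (A : Matrix (Fin k) (Fin l) (ZMod 2)), M.IsoTo (colMatroid A)

/-- A simple matroid: no loops and no pair of distinct parallel elements,
i.e. every subset of the ground set of size at most two is independent. -/
def IsSimple' {α : Type*} (M : Matroid α) : Prop :=
  ∀ e ∈ M.E, ∀ f ∈ M.E, M.Indep {e, f}

/-- `N` is a simplification of `M`: `N` is a simple restriction of `M` containing
an element of every parallel class of `M`. -/
def IsSimplificationOf {α : Type*} (N M : Matroid α) : Prop :=
  ∃ S ⊆ M.E, N = M ↾ S ∧ N.IsSimple' ∧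
    ∀ e ∈ M.E, M.Indep {e} → ∃ f ∈ S, e = f ∨ ¬ M.Indep {e, f}

/-- `N` is a cosimplification of `M`: the dual of `N` is a simplification of the dual of `M`. -/
def IsCosimplificationOf {α : Type*} (N M : Matroid α) : Prop :=
  N✶.IsSimplificationOf M✶

/-- A circuit: a minimal dependent set. -/
def IsCircuitOf {α : Type*} (M : Matroid α) (C : Set α) : Prop :=
  C ⊆ M.E ∧ ¬ M.Indep C ∧ ∀ D ⊂ C, M.Indep D

end Matroid

/-- `r` is a row of `A` such that every column of `A` has at most two nonzero entries
outside row `r`. -/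
def EvenCycleRep {m n : Type*} (A : Matrix m n (ZMod 2)) (r : m) : Prop :=
  ∀ j : n, ({i : m | i ≠ r ∧ A i j ≠ 0}).ncard ≤ 2

/-- An even-cycle matroid: one isomorphic to the column matroid of a `GF(2)` matrix having
a row `r` such that every column has at most two nonzero entries outside row `r`. -/
def Matroid.IsEvenCycle {α : Type*} (M : Matroid α) : Prop :=
  ∃ (k l : ℕ) (A : Matrix (Fin k) (Fin l) (ZMod 2)) (r : Fin k),
    EvenCycleRep A r ∧ M.IsoTo (colMatroid A)

/-- Every column of `A` has at most two nonzero entries. -/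
def GraphicRep {m n : Type*} (A : Matrix m n (ZMod 2)) : Prop :=
  ∀ j : n, ({i : m | A i j ≠ 0}).ncard ≤ 2

/-- A graphic matroid: one isomorphic to the column matroid of a `GF(2)` matrix in which
every column has at most two nonzero entries. -/
def Matroid.IsGraphic {α : Type*} (M : Matroid α) : Prop :=
  ∃ (k l : ℕ) (A : Matrix (Fin k) (Fin l) (ZMod 2)),
    GraphicRep A ∧ M.IsoTo (colMatroid A)

/-- A cographic matroid: the dual of a graphic matroid. -/
def Matroid.IsCographic {α : Type*} (M : Matroid α) : Prop := M✶.IsGraphic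

/-- An even-cut matroid: one isomorphic to the column matroid of a `GF(2)` matrix `A` having a
row `r` such that the column matroid of the matrix obtained by deleting row `r` is cographic. -/
def Matroid.IsEvenCut {α : Type*} (M : Matroid α) : Prop :=
  ∃ (k l : ℕ) (A : Matrix (Fin k) (Fin l) (ZMod 2)) (r : Fin k),
    (colMatroid (A.submatrix (Subtype.val : {i : Fin k // i ≠ r} → Fin k) id)).IsCographic ∧
    M.IsoTo (colMatroid A)

/-- `r₁, r₂` are rows of `A` such that every column of `A` either has at most one nonzero entry
outside rows `r₁, r₂`, or has exactly two nonzero entries outside rows `r₁, r₂` and is zero in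
both rows `r₁` and `r₂`. -/
def BlockingPairRep {m n : Type*} (A : Matrix m n (ZMod 2)) (r₁ r₂ : m) : Prop :=
  ∀ j : n, ({i : m | i ≠ r₁ ∧ i ≠ r₂ ∧ A i j ≠ 0}).ncard ≤ 1 ∨
    (({i : m | i ≠ r₁ ∧ i ≠ r₂ ∧ A i j ≠ 0}).ncard = 2 ∧ A r₁ j = 0 ∧ A r₂ j = 0)

/-- An even-cycle matroid with a blocking pair. -/
def Matroid.IsEvenCycleBP {α : Type*} (M : Matroid α) : Prop :=
  ∃ (k l : ℕ) (A : Matrix (Fin k) (Fin l) (ZMod 2)) (r₁ r₂ : Fin k), r₁ ≠ r₂ ∧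
    BlockingPairRep A r₁ r₂ ∧ M.IsoTo (colMatroid A)

/-- `N` is an excluded minor for the class of matroids satisfying `P`. -/
def IsExcludedMinorFor {α : Type*} (N : Matroid α) (P : Matroid α → Prop) : Prop :=
  ¬ P N ∧ ∀ e ∈ N.E, P (N.del {e}) ∧ P (N.con {e})

/-- The points of the binary projective space `PG(3,2)`: nonzero vectors of `GF(2)^4`. -/
abbrev PGIdx : Type := {v : Fin 4 → ZMod 2 // v ≠ 0}

/-- The matrix whose columns are the 15 nonzero vectors of `GF(2)^4`. -/
def PGMatrix : Matrix (Fin 4) PGIdx (ZMod 2) := fun i v => v.1 i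

/-- The binary projective geometry `PG(3,2)`. -/
def PG32 : Matroid PGIdx := colMatroid PGMatrix

/-- The vertex-edge incidence matrix of a simple graph on vertex set `V` whose edges are a
set of pairs `(u, w)` with `u < w`. -/
def incMatrix {k : ℕ} (E : Type*) (val : E → Fin k × Fin k) :
    Matrix (Fin k) E (ZMod 2) :=
  fun i e => if i = (val e).1 ∨ i = (val e).2 then 1 else 0

/-- Edges of `K7` minus two adjacent edges. -/
abbrev L19Edge : Type := {p : Fin 7 × Fin 7 // p.1 < p.2 ∧ p ≠ (0, 1) ∧ p ≠ (0, 2)}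

/-- `L19`: the dual of the cycle matroid of `K7` minus two adjacent edges. -/
def L19 : Matroid L19Edge := (colMatroid (incMatrix L19Edge Subtype.val))✶

/-- The matroid `L11`. -/
def L11 : Matroid (Fin 11) :=
  colMatroid (!![1,0,0,0,0,0,1,0,1,0,1;
                 0,1,0,0,0,0,1,0,0,1,1;
                 0,0,1,0,0,0,0,1,1,1,0;
                 0,0,0,1,0,0,0,1,1,0,1;
                 0,0,0,0,1,0,0,1,0,1,1;
                 0,0,0,0,0,1,0,0,1,1,1] : Matrix (Fin 6) (Fin 11) (ZMod 2))

/-- Edges of the complete graph `K6`. -/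
abbrev K6Edge : Type := {p : Fin 6 × Fin 6 // p.1 < p.2}

/-- The cycle matroid `M(K6)`. -/
def MK6 : Matroid K6Edge := colMatroid (incMatrix K6Edge Subtype.val)

/-- Edges of `K6` minus an edge. -/
abbrev K6eEdge : Type := {p : Fin 6 × Fin 6 // p.1 < p.2 ∧ p ≠ (0, 1)}

/-- The cycle matroid `M(K6 \ e)`. -/
def MK6e : Matroid K6eEdge := colMatroid (incMatrix K6eEdge Subtype.val)

/-- Edges of the complete graph `K5`. -/
abbrev K5Edge : Type := {p : Fin 5 × Fin 5 // p.1 < p.2}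

/-- The cycle matroid `M(K5)`. -/
def MK5 : Matroid K5Edge := colMatroid (incMatrix K5Edge Subtype.val)

/-- The matroid `H12`. -/
def H12 : Matroid (Fin 12) :=
  colMatroid (!![1,0,1,0,1,0,1,0,1,0,1,0;
                 0,0,0,0,1,1,1,1,0,0,0,0;
                 0,0,0,0,1,1,0,0,1,1,0,0;
                 1,1,0,0,0,0,0,0,0,0,1,1;
                 0,0,1,1,0,0,1,1,0,0,1,1] : Matrix (Fin 5) (Fin 12) (ZMod 2))

end

/-!
The incidence matrix of `K5` over `GF(2)` has rank 4, and the six triangles `123`, `124`, `012`,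
`013`, `024`, `034` form a basis of its orthogonal complement, the cycle space. Whenever the rows
of `A` and `B` are independent, `A * Bᵀ = 0` and the ranks add up to the number of columns, the
kernel of `A` is the row space of `B`. So the only vector supported on `S` in the kernel of `A` is
zero iff no nonzero combination of the rows of `B` vanishes off `S`; that is, `S` is independent
in `M[A]` iff its complement spans in `M[B]`, and `M[A]✶ = M[B]`. Hence `M✶(K5)` is represented
by the triangle-edge incidence matrix. In it, an edge at vertex `0` lies in exactly two of the
four triangles through `0` and in neither of `123`, `124`, and every other edge lies in at most
one triangle through `0`: the rows of `123` and `124` form a blocking pair.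
-/

namespace Matrix

variable {K m m₁ m₂ n : Type*} [Field K]

theorem linearIndepOn_col_iff [Fintype n] (A : Matrix m n K) (S : Set n) :
    LinearIndepOn K A.col S ↔ ∀ x : n → K, (∀ j ∉ S, x j = 0) → A *ᵥ x = 0 → x = 0 := by
  classical
  have hsum (t : Finset n) (x : n → K) (hx : ∀ j ∉ t, x j = 0) :
      ∑ j ∈ t, x j • A.col j = A *ᵥ x := by
    rw [← vecMul_transpose, vecMul_eq_sum]
    exact Finset.sum_subset (Finset.subset_univ t) fun j _ hj => by simp [hx j hj]
  rw [linearIndepOn_iff'']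
  constructor
  · intro h x hxS hAx
    funext j
    by_cases hj : j ∈ S
    · refine h (Set.toFinite S).toFinset x (by simp) (fun i hi => hxS i (by simpa using hi))
        ?_ j (by simpa using hj)
      rw [hsum _ _ fun i hi => hxS i (by simpa using hi), hAx]
    · exact hxS j hj
  · intro h t g htS hg hg0 i _
    exact congrFun (h g (fun j hj => hg j fun hjt => hj (htS hjt)) (hsum t g hg ▸ hg0)) i

theorem linearIndependent_row_iff_forall_vecMul_eq_zero [Fintype m] (A : Matrix m n K) :
    LinearIndependent K A.row ↔ ∀ c : m → K, c ᵥ* A = 0 → c = 0 := by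
  rw [← vecMul_injective_iff, ← coe_vecMulLinear, injective_iff_map_eq_zero]
  rfl

theorem span_range_col_eq_top_iff [Fintype m] [Fintype n] (A : Matrix m n K) :
    Submodule.span K (Set.range A.col) = ⊤ ↔ LinearIndependent K A.row := by
  rw [linearIndependent_iff_card_eq_finrank_span, Set.finrank, ← rank_eq_finrank_span_row,
    rank_eq_finrank_span_cols, ← Module.finrank_fintype_fun_eq_card K]
  exact ⟨fun h => by rw [h, finrank_top], fun h => Submodule.eq_top_of_finrank_eq h.symm⟩

theorem ker_mulVecLin_eq_span_range_row [Fintype m₁] [Fintype m₂] [Fintype n]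
    {A : Matrix m₁ n K} {B : Matrix m₂ n K}
    (hA : LinearIndependent K A.row) (hB : LinearIndependent K B.row) (hAB : A * Bᵀ = 0)
    (hcard : Fintype.card m₁ + Fintype.card m₂ = Fintype.card n) :
    LinearMap.ker A.mulVecLin = Submodule.span K (Set.range B.row) := by
  symm
  refine Submodule.eq_of_le_of_finrank_eq ?_ ?_
  · rw [Submodule.span_le]
    rintro _ ⟨k, rfl⟩
    ext i
    exact congrFun (congrFun hAB i) k
  · have hrank := LinearMap.finrank_range_add_finrank_ker A.mulVecLin
    rw [← rank, hA.rank_matrix, Module.finrank_fintype_fun_eq_card] at hrank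
    rw [finrank_span_eq_card hB]
    omega

theorem linearIndepOn_col_iff_span_image_col_compl_eq_top [Fintype m₂] [Fintype n]
    {A : Matrix m₁ n K} {B : Matrix m₂ n K} (hB : LinearIndependent K B.row)
    (hker : LinearMap.ker A.mulVecLin = Submodule.span K (Set.range B.row)) (S : Set n) :
    LinearIndepOn K A.col S ↔ Submodule.span K (B.col '' Sᶜ) = ⊤ := by
  classical
  have hmem (x : n → K) : A *ᵥ x = 0 ↔ ∃ c, c ᵥ* B = x := by
    rw [← mulVecLin_apply, ← LinearMap.mem_ker, hker, Submodule.mem_span_range_iff_exists_fun]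
    simp only [vecMul_eq_sum]
    rfl
  rw [linearIndepOn_col_iff, Set.image_eq_range]
  change _ ↔ Submodule.span K (Set.range (B.submatrix id ((↑) : ↥Sᶜ → n)).col) = ⊤
  rw [span_range_col_eq_top_iff, linearIndependent_row_iff_forall_vecMul_eq_zero]
  rw [linearIndependent_row_iff_forall_vecMul_eq_zero] at hB
  constructor
  · intro h c hc
    refine hB c (h _ (fun j hj => ?_) ((hmem _).2 ⟨c, rfl⟩))
    exact congrFun hc ⟨j, hj⟩
  · intro h x hxS hx
    obtain ⟨c, rfl⟩ := (hmem x).1 hx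
    rw [h c (funext fun j => hxS j j.2), zero_vecMul]

end Matrix

section colMatroid

open scoped Matrix

variable {m m₁ m₂ n n' : Type*} [Fintype m] [Fintype m₁] [Fintype m₂] [Fintype n] [Fintype n']

theorem colMatroid_indep_iff (A : Matrix m n (ZMod 2)) {I : Set n} :
    (colMatroid A).Indep I ↔ LinearIndepOn (ZMod 2) A.col I := by
  simp [colMatroid, IndepMatroid.ofFinite, LinearIndepOn, Matrix.col]

@[simp]
theorem colMatroid_ground (A : Matrix m n (ZMod 2)) : (colMatroid A).E = Set.univ := rfl

theorem colMatroid_insert_indep_iff {A : Matrix m n (ZMod 2)} {I : Set n} {j : n}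
    (hI : (colMatroid A).Indep I) (hj : j ∉ I) :
    (colMatroid A).Indep (insert j I) ↔ A.col j ∉ Submodule.span (ZMod 2) (A.col '' I) := by
  rw [colMatroid_indep_iff] at hI ⊢
  rw [linearIndepOn_insert hj]
  exact and_iff_right hI

theorem colMatroid_isBase_iff {A : Matrix m n (ZMod 2)}
    (hA : Submodule.span (ZMod 2) (Set.range A.col) = ⊤) {S : Set n} :
    (colMatroid A).IsBase S ↔
      LinearIndepOn (ZMod 2) A.col S ∧ Submodule.span (ZMod 2) (A.col '' S) = ⊤ := by
  rw [← colMatroid_indep_iff]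
  constructor
  · intro hS
    refine ⟨hS.indep, eq_top_iff.2 (hA ▸ Submodule.span_le.2 ?_)⟩
    rintro _ ⟨j, rfl⟩
    by_contra hspan
    by_cases hj : j ∈ S
    · exact hspan (Submodule.subset_span ⟨j, hj, rfl⟩)
    · exact (hS.insert_dep ⟨trivial, hj⟩).not_indep
        ((colMatroid_insert_indep_iff hS.indep hj).2 hspan)
  · rintro ⟨hS, hspan⟩
    refine hS.isBase_of_forall_insert fun j hj => ?_
    rw [colMatroid_insert_indep_iff hS hj.2, hspan, not_not]
    exact Submodule.mem_top

theorem colMatroid_dual {A : Matrix m₁ n (ZMod 2)} {B : Matrix m₂ n (ZMod 2)}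
    (hA : LinearIndependent (ZMod 2) A.row) (hB : LinearIndependent (ZMod 2) B.row)
    (hAB : A * Bᵀ = 0) (hcard : Fintype.card m₁ + Fintype.card m₂ = Fintype.card n) :
    (colMatroid A)✶ = colMatroid B := by
  have hBA : B * Aᵀ = 0 := by
    rw [← Matrix.transpose_transpose (B * Aᵀ), Matrix.transpose_mul, Matrix.transpose_transpose,
      hAB, Matrix.transpose_zero]
  have hkerA := Matrix.ker_mulVecLin_eq_span_range_row hA hB hAB hcard
  have hkerB := Matrix.ker_mulVecLin_eq_span_range_row hB hA hBA (by omega)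
  refine Matroid.ext_isBase rfl fun X _ => ?_
  rw [Matroid.dual_isBase_iff, colMatroid_ground, ← Set.compl_eq_univ_sdiff,
    colMatroid_isBase_iff ((Matrix.span_range_col_eq_top_iff A).2 hA),
    colMatroid_isBase_iff ((Matrix.span_range_col_eq_top_iff B).2 hB),
    Matrix.linearIndepOn_col_iff_span_image_col_compl_eq_top hB hkerA,
    Matrix.linearIndepOn_col_iff_span_image_col_compl_eq_top hA hkerB, compl_compl, and_comm]

theorem colMatroid_mul {P : Matrix m₁ m (ZMod 2)} (hP : LinearIndependent (ZMod 2) P.col)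
    (A : Matrix m n (ZMod 2)) : colMatroid (P * A) = colMatroid A := by
  have hker : LinearMap.ker P.mulVecLin = ⊥ := by
    rw [LinearMap.ker_eq_bot, Matrix.coe_mulVecLin]
    exact Matrix.mulVec_injective_iff.2 hP
  refine Matroid.ext_indep rfl fun I _ => ?_
  rw [colMatroid_indep_iff, colMatroid_indep_iff, LinearIndepOn, LinearIndepOn,
    ← P.mulVecLin.linearIndependent_iff hker]
  rfl

theorem colMatroid_isoTo_submatrix (A : Matrix m n (ZMod 2)) (e : n ≃ n') :
    (colMatroid A).IsoTo (colMatroid (A.submatrix id e.symm)) := by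
  refine ⟨e, e.bijective.bijOn_univ, fun I _ => ?_⟩
  rw [colMatroid_indep_iff, colMatroid_indep_iff, ← linearIndepOn_equiv]
  congr!
  ext j i
  simp [Matrix.col, Function.comp]

theorem isEvenCycleBP_colMatroid {k : ℕ} {A : Matrix (Fin k) n (ZMod 2)} {r₁ r₂ : Fin k}
    (hr : r₁ ≠ r₂) (hA : BlockingPairRep A r₁ r₂) : (colMatroid A).IsEvenCycleBP :=
  ⟨k, Fintype.card n, A.submatrix id (Fintype.equivFin n).symm, r₁, r₂, hr,
    fun _ => hA _, colMatroid_isoTo_submatrix A _⟩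

end colMatroid

namespace K5

open scoped Matrix

def reducedIncMatrix : Matrix (Fin 4) K5Edge (ZMod 2) :=
  (incMatrix K5Edge Subtype.val).submatrix Fin.castSucc id

-- Each edge has two ends, so over `GF(2)` the row of vertex 4 is the sum of the other rows.
def appendRowSum : Matrix (Fin 5) (Fin 4) (ZMod 2) :=
  !![1, 0, 0, 0; 0, 1, 0, 0; 0, 0, 1, 0; 0, 0, 0, 1; 1, 1, 1, 1]

def triangles : Fin 6 → Finset (Fin 5) :=
  ![{1, 2, 3}, {1, 2, 4}, {0, 1, 2}, {0, 1, 3}, {0, 2, 4}, {0, 3, 4}]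

def triangleMatrix : Matrix (Fin 6) K5Edge (ZMod 2) :=
  fun i e => if e.1.1 ∈ triangles i ∧ e.1.2 ∈ triangles i then 1 else 0

theorem incMatrix_eq : incMatrix K5Edge Subtype.val = appendRowSum * reducedIncMatrix := by
  decide

theorem linearIndependent_appendRowSum : LinearIndependent (ZMod 2) appendRowSum.col :=
  Fintype.linearIndependent_iff.2 (by decide)

theorem linearIndependent_reducedIncMatrix : LinearIndependent (ZMod 2) reducedIncMatrix.row :=
  Fintype.linearIndependent_iff.2 (by decide)

theorem linearIndependent_triangleMatrix : LinearIndependent (ZMod 2) triangleMatrix.row :=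
  Fintype.linearIndependent_iff.2 (by decide)

theorem reducedIncMatrix_mul_triangleMatrix : reducedIncMatrix * triangleMatrixᵀ = 0 := by
  decide

theorem blockingPairRep_triangleMatrix : BlockingPairRep triangleMatrix 0 1 := by
  simp only [BlockingPairRep, Set.ncard_eq_toFinset_card']
  decide

end K5

/-- `M✶(K5)` is an even-cycle matroid with a blocking pair. -/
theorem MK5_dual_evenCycleBP : (MK5✶).IsEvenCycleBP := by
  rw [MK5, K5.incMatrix_eq, colMatroid_mul K5.linearIndependent_appendRowSum,
    colMatroid_dual K5.linearIndependent_reducedIncMatrix K5.linearIndependent_triangleMatrix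
      K5.reducedIncMatrix_mul_triangleMatrix rfl]
  exact isEvenCycleBP_colMatroid (by decide) K5.blockingPairRep_triangleMatrix
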